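/- For distinct natural numbers m ≠ n, the Chebyshev polynomials are orthogonal with respect to the weight 1/√(1−x²) on (−1,1): the integral of T_n(x) T_m(x)/√(1 − x²) over x in (−1,1) equals 0. Moreover, this integral equals π when m = n = 0 and π/2 when m = n > 0. -/
import Mathlib


open Polynomial Polynomial.Chebyshev MeasureTheory

lemma my_integral_cos_int_mul (k : ℤ) :
    ∫ θ in (0:ℝ)..Real.pi, Real.cos (k * θ) = if k = 0 then Real.pi else 0 := by
  rcases eq_or_ne k 0 with hk | hk
  · simp [hk]
  · have hk' : (k:ℝ) ≠ 0 := Int.cast_ne_zero.mpr hk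
    rw [if_neg hk, intervalIntegral.integral_comp_mul_left _ hk']
    simp [Real.sin_int_mul_pi]

lemma my_image_cos : Real.cos '' Set.Ioo 0 Real.pi = Set.Ioo (-1 : ℝ) 1 := by
  ext y
  constructor
  · rintro ⟨θ, ⟨h0, hπ⟩, rfl⟩
    constructor
    · have := Real.strictAntiOn_cos ⟨h0.le, hπ.le⟩ ⟨Real.pi_pos.le, le_refl _⟩ hπ
      simpa [Real.cos_pi] using this
    · have := Real.strictAntiOn_cos ⟨le_refl _, Real.pi_pos.le⟩ ⟨h0.le, hπ.le⟩ h0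
      simpa using this
  · rintro ⟨h1, h2⟩
    have hlt : Real.arccos y < Real.pi := by
      rw [Real.arccos]
      have := Real.neg_pi_div_two_lt_arcsin.mpr h1
      linarith
    exact ⟨Real.arccos y, ⟨Real.arccos_pos.mpr h2, hlt⟩, Real.cos_arccos h1.le h2.le⟩

lemma my_key (m n : ℕ) :
    ∫ x in Set.Ioo (-1 : ℝ) 1,
        (T ℝ n).eval x * (T ℝ m).eval x / Real.sqrt (1 - x ^ 2)
      = (if ((n:ℤ) - m) = 0 then Real.pi else 0) / 2
        + (if ((n:ℤ) + m) = 0 then Real.pi else 0) / 2 := by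
  have hinj : Set.InjOn Real.cos (Set.Ioo 0 Real.pi) :=
    Real.injOn_cos.mono Set.Ioo_subset_Icc_self
  have hderiv : ∀ x ∈ Set.Ioo (0:ℝ) Real.pi,
      HasDerivWithinAt Real.cos (-Real.sin x) (Set.Ioo 0 Real.pi) x :=
    fun x _ => (Real.hasDerivAt_cos x).hasDerivWithinAt
  have h := integral_image_eq_integral_abs_deriv_smul measurableSet_Ioo hderiv hinj
    (fun x => (T ℝ n).eval x * (T ℝ m).eval x / Real.sqrt (1 - x ^ 2))
  rw [my_image_cos] at h
  rw [h]
  have heq : ∀ θ ∈ Set.Ioo (0:ℝ) Real.pi,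
      |(-Real.sin θ)| • ((T ℝ n).eval (Real.cos θ) * (T ℝ m).eval (Real.cos θ) /
        Real.sqrt (1 - Real.cos θ ^ 2))
      = (Real.cos ((n:ℤ) * θ) * Real.cos ((m:ℤ) * θ)) := by
    intro θ hθ
    have hs : 0 < Real.sin θ := Real.sin_pos_of_pos_of_lt_pi hθ.1 hθ.2
    have h1 : (1 : ℝ) - Real.cos θ ^ 2 = Real.sin θ ^ 2 := by
      have := Real.sin_sq_add_cos_sq θ; linarith
    rw [h1, Real.sqrt_sq hs.le, abs_neg, abs_of_pos hs, T_real_cos, T_real_cos, smul_eq_mul]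
    field_simp
  rw [MeasureTheory.setIntegral_congr_fun measurableSet_Ioo heq]
  have hprod : ∀ θ : ℝ, Real.cos ((n:ℤ) * θ) * Real.cos ((m:ℤ) * θ)
      = Real.cos ((((n:ℤ) - m : ℤ) : ℝ) * θ) / 2 + Real.cos ((((n:ℤ) + m : ℤ) : ℝ) * θ) / 2 := by
    intro θ
    push_cast
    rw [sub_mul, add_mul, Real.cos_sub, Real.cos_add]
    ring
  rw [MeasureTheory.setIntegral_congr_fun measurableSet_Ioo (fun θ _ => hprod θ)]
  rw [← MeasureTheory.integral_Ioc_eq_integral_Ioo,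
    ← intervalIntegral.integral_of_le Real.pi_pos.le]
  have hint1 : IntervalIntegrable (fun θ => Real.cos ((((n:ℤ) - m : ℤ) : ℝ) * θ) / 2)
      volume 0 Real.pi :=
    (((Real.continuous_cos.comp (continuous_const.mul continuous_id)).div_const 2).intervalIntegrable _ _)
  have hint2 : IntervalIntegrable (fun θ => Real.cos ((((n:ℤ) + m : ℤ) : ℝ) * θ) / 2)
      volume 0 Real.pi :=
    (((Real.continuous_cos.comp (continuous_const.mul continuous_id)).div_const 2).intervalIntegrable _ _)
  rw [intervalIntegral.integral_add hint1 hint2, intervalIntegral.integral_div,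
    intervalIntegral.integral_div, my_integral_cos_int_mul, my_integral_cos_int_mul]

theorem chebyshev_orthogonality (m n : ℕ) :
    (m ≠ n → ∫ x in Set.Ioo (-1 : ℝ) 1,
        (T ℝ n).eval x * (T ℝ m).eval x / Real.sqrt (1 - x ^ 2) = 0) ∧
    (m = 0 → n = 0 → ∫ x in Set.Ioo (-1 : ℝ) 1,
        (T ℝ n).eval x * (T ℝ m).eval x / Real.sqrt (1 - x ^ 2) = Real.pi) ∧
    (m = n → 0 < n → ∫ x in Set.Ioo (-1 : ℝ) 1,
        (T ℝ n).eval x * (T ℝ m).eval x / Real.sqrt (1 - x ^ 2) = Real.pi / 2) := by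
  refine ⟨fun h => ?_, fun hm hn => ?_, fun hm hn => ?_⟩
  · rw [my_key]
    have h1 : ((n:ℤ) - m) ≠ 0 := by omega
    have h2 : ((n:ℤ) + m) ≠ 0 ∨ ((n:ℤ) = 0 ∧ (m:ℤ) = 0) := by omega
    rcases h2 with h2 | ⟨h3, h4⟩
    · simp [h1, h2]
    · omega
  · subst hm; subst hn; rw [my_key]; norm_num
  · subst hm; rw [my_key]
    have h1 : ((m:ℤ) - m) = 0 := by ring
    have h2 : ((m:ℤ) + m) ≠ 0 := by omega
    rw [if_pos h1, if_neg h2]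
    ring
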